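/- Let (𝔫, Q) be a metric skew algebra with orthonormal basis ℬ of eigenvectors for the nil-Ricci endomorphism, with Ricci eigenvalue vector Ric ∈ ℝ^n and structure vector [α²] ∈ ℝ^m listing the squares (α_{ij}^k)² over the set Λ of triples (i,j,k) with i < j and α_{ij}^k ≠ 0. Let Y be the m × n root matrix and U = Y Y^T. Then the endomorphism D = Ric - β·Id is a derivation of 𝔫 if and only if U [α²] = -2β 𝟙_m. -/

import Mathlib

/-!
In the Ricci eigenbasis the structure constants give
`κ_l = -½ Σ_{p,q} (α_{lp}^q)² + ¼ Σ_{p,q} (α_{pq}^l)²`, and summing the rows of the root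
matrix over `Λ` (using `α_{ji}^k = -α_{ij}^k` to pass to all pairs `i ≠ j`) turns this into
`Yᵀ [α²] = -2κ`. Hence the row of `U [α²] = Y (Yᵀ [α²])` indexed by `(i,j,k) ∈ Λ` is
`-2 (κ_i + κ_j - κ_k)`. On the other hand a diagonal map `D e_i = d_i e_i` is a derivation
exactly when `d_k = d_i + d_j` whenever `α_{ij}^k ≠ 0`, which for `d = κ - β` says
`κ_i + κ_j - κ_k = β` on `Λ`.
-/

open scoped RealInnerProductSpace

/-- The root vector `Y_{ij}^k = e_i + e_j - e_k` in `ℝ^n`. -/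
def rootVec {n : ℕ} (i j k : Fin n) : Fin n → ℝ :=
  fun l => (if l = i then (1:ℝ) else 0) + (if l = j then (1:ℝ) else 0)
    - (if l = k then (1:ℝ) else 0)

open Finset Matrix Module

def IsDerivation {R M : Type*} [CommSemiring R] [AddCommMonoid M] [Module R M]
    (lb : M →ₗ[R] M →ₗ[R] M) (D : M →ₗ[R] M) : Prop :=
  ∀ x y, D (lb x y) = lb (D x) y + lb x (D y)

section Derivation

variable {ι R M : Type*} [CommSemiring R] [AddCommMonoid M] [Module R M]
  (lb : M →ₗ[R] M →ₗ[R] M) {D : M →ₗ[R] M}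

theorem isDerivation_iff_basis (b : Basis ι R M) :
    IsDerivation lb D ↔
      ∀ i j, D (lb (b i) (b j)) = lb (D (b i)) (b j) + lb (b i) (D (b j)) := by
  refine ⟨fun h i j => h _ _, fun h x y => ?_⟩
  have hext : lb.compr₂ D = lb.comp D + lb.compl₂ D := LinearMap.ext_basis b b h
  exact LinearMap.congr_fun₂ hext x y

theorem Module.Basis.repr_apply_of_apply_eq_smul (b : Basis ι R M) {d : ι → R}
    (hD : ∀ i, D (b i) = d i • b i) (x : M) (k : ι) :
    b.repr (D x) k = d k * b.repr x k := by
  classical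
  have hext : (Finsupp.lapply k ∘ₗ b.repr.toLinearMap) ∘ₗ D =
      d k • (Finsupp.lapply k ∘ₗ b.repr.toLinearMap) :=
    b.ext fun i => by
      simp only [LinearMap.comp_apply, hD, map_smul]
      by_cases h : i = k <;> simp [h]
  exact LinearMap.congr_fun hext x

theorem isDerivation_iff_of_apply_eq_smul [IsDomain R] (b : Basis ι R M) {d : ι → R}
    (hD : ∀ i, D (b i) = d i • b i) :
    IsDerivation lb D ↔ ∀ i j k, b.repr (lb (b i) (b j)) k ≠ 0 → d k = d i + d j := by
  rw [isDerivation_iff_basis lb b]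
  refine forall₂_congr fun i j => ?_
  have hrhs : lb (D (b i)) (b j) + lb (b i) (D (b j)) = (d i + d j) • lb (b i) (b j) := by
    simp only [hD, map_smul, LinearMap.smul_apply, add_smul]
  rw [hrhs, ← b.repr.injective.eq_iff, Finsupp.ext_iff]
  refine forall_congr' fun k => ?_
  rw [b.repr_apply_of_apply_eq_smul hD, map_smul, Finsupp.smul_apply, smul_eq_mul,
    mul_eq_mul_right_iff, or_iff_not_imp_right]

end Derivation

section Orthonormal

variable {ι L : Type*} [Fintype ι] [NormedAddCommGroup L] [InnerProductSpace ℝ L]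
  {b : Basis ι ℝ L}

theorem Module.Basis.repr_apply_eq_inner_of_orthonormal (hb : Orthonormal ℝ b) (x : L)
    (k : ι) :
    b.repr x k = ⟪b k, x⟫ := by
  simpa using (b.toOrthonormalBasis hb).repr_apply_apply x k

theorem Module.Basis.real_inner_self_eq_sum_sq_of_orthonormal (hb : Orthonormal ℝ b) (x : L) :
    ⟪x, x⟫ = ∑ i, ⟪x, b i⟫ ^ 2 := by
  simpa [sq, real_inner_comm] using ((b.toOrthonormalBasis hb).sum_inner_mul_inner x x).symm

noncomputable def nilRicci (lb : L →ₗ[ℝ] L →ₗ[ℝ] L) (b : ι → L) (X Y : L) : ℝ :=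
  -(1/2) * ∑ i, ⟪lb X (b i), lb Y (b i)⟫
    + (1/4) * ∑ i, ∑ j, ⟪lb (b i) (b j), X⟫ * ⟪lb (b i) (b j), Y⟫

theorem nilRicci_self_eq_of_orthonormal (hb : Orthonormal ℝ b) (lb : L →ₗ[ℝ] L →ₗ[ℝ] L)
    (X : L) :
    nilRicci lb b X X = -(1/2) * ∑ i, ∑ j, ⟪lb X (b i), b j⟫ ^ 2
      + (1/4) * ∑ i, ∑ j, ⟪lb (b i) (b j), X⟫ ^ 2 := by
  simp only [nilRicci, b.real_inner_self_eq_sum_sq_of_orthonormal hb, sq]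

end Orthonormal

theorem rootVec_comm {n : ℕ} (i j k : Fin n) : rootVec i j k = rootVec j i k := by
  funext l
  simp only [rootVec]
  ring

theorem rootVec_dotProduct {n : ℕ} (i j k : Fin n) (v : Fin n → ℝ) :
    rootVec i j k ⬝ᵥ v = v i + v j - v k := by
  simp [rootVec, dotProduct, sub_mul, add_mul, ite_mul, sum_add_distrib, sum_sub_distrib]

theorem sum_ite_lt_eq_half_sum {ι : Type*} [Fintype ι] [LinearOrder ι] (G : ι → ι → ℝ)
    (hsymm : ∀ i j, G i j = G j i) (hdiag : ∀ i, G i i = 0) :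
    ∑ i, ∑ j, (if i < j then G i j else 0) = (1/2) * ∑ i, ∑ j, G i j := by
  have hsplit : ∀ i j, G i j = (if i < j then G i j else 0) + (if j < i then G i j else 0) := by
    intro i j
    rcases lt_trichotomy i j with h | rfl | h
    · simp [h, h.not_gt]
    · simp [hdiag]
    · simp [h, h.not_gt]
  have hswap : ∑ i, ∑ j, (if j < i then G i j else 0)
      = ∑ i, ∑ j, (if i < j then G i j else 0) := by
    rw [sum_comm]
    simp only [hsymm]
  have htotal : ∑ i, ∑ j, G i j = ∑ i, ∑ j, (if i < j then G i j else 0)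
      + ∑ i, ∑ j, (if j < i then G i j else 0) := by
    simp only [← sum_add_distrib, ← hsplit]
  linarith

theorem sum_rootVec_mul_sq {n : ℕ} {α : Fin n → Fin n → Fin n → ℝ}
    (hα : ∀ i j k, α j i k = -α i j k) (l : Fin n) :
    ∑ i, ∑ j, ∑ k, rootVec i j k l * α i j k ^ 2
      = 2 * ∑ j, ∑ k, α l j k ^ 2 - ∑ i, ∑ j, α i j l ^ 2 := by
  have hswap : ∑ i, ∑ k, α i l k ^ 2 = ∑ j, ∑ k, α l j k ^ 2 := by
    simp only [hα _ l, neg_sq]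
  simp only [rootVec, sub_mul, add_mul, ite_mul, one_mul, zero_mul, sum_sub_distrib,
    sum_add_distrib, sum_ite_eq, mem_univ, if_true, sum_ite_irrel, sum_const_zero]
  rw [hswap]
  ring

theorem sum_comp_enum_eq_sum_ite_lt {R M : Type*} [Zero R] [AddCommMonoid M] {n m : ℕ}
    {α : Fin n → Fin n → Fin n → R} {t : Fin m → Fin n × Fin n × Fin n}
    (ht : Function.Injective t)
    (htmem : ∀ r, (t r).1 < (t r).2.1 ∧ α (t r).1 (t r).2.1 (t r).2.2 ≠ 0)
    (htsurj : ∀ i j k, i < j → α i j k ≠ 0 → ∃ r, t r = (i, j, k))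
    (f : Fin n × Fin n × Fin n → M) (hf : ∀ p, α p.1 p.2.1 p.2.2 = 0 → f p = 0) :
    ∑ r, f (t r) = ∑ p, if p.1 < p.2.1 then f p else 0 := by
  classical
  rw [← sum_image ht.injOn, ← sum_filter]
  refine sum_subset (fun p hp => ?_) (fun p hlt hnot => hf p ?_)
  · obtain ⟨r, -, rfl⟩ := mem_image.mp hp
    exact mem_filter.mpr ⟨mem_univ _, (htmem r).1⟩
  · by_contra hne
    obtain ⟨r, hr⟩ := htsurj p.1 p.2.1 p.2.2 (mem_filter.mp hlt).2 hne
    exact hnot (mem_image.mpr ⟨r, mem_univ r, hr⟩)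

theorem sum_rootVec_comp_enum_mul_sq {n m : ℕ} {α : Fin n → Fin n → Fin n → ℝ}
    (hα : ∀ i j k, α j i k = -α i j k) {t : Fin m → Fin n × Fin n × Fin n}
    (ht : Function.Injective t)
    (htmem : ∀ r, (t r).1 < (t r).2.1 ∧ α (t r).1 (t r).2.1 (t r).2.2 ≠ 0)
    (htsurj : ∀ i j k, i < j → α i j k ≠ 0 → ∃ r, t r = (i, j, k)) (l : Fin n) :
    ∑ r, rootVec (t r).1 (t r).2.1 (t r).2.2 l * α (t r).1 (t r).2.1 (t r).2.2 ^ 2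
      = ∑ j, ∑ k, α l j k ^ 2 - (1/2) * ∑ i, ∑ j, α i j l ^ 2 := by
  have hdiag : ∀ i k, α i i k = 0 := fun i k => by linarith [hα i i k]
  rw [sum_comp_enum_eq_sum_ite_lt ht htmem htsurj
    (fun p => rootVec p.1 p.2.1 p.2.2 l * α p.1 p.2.1 p.2.2 ^ 2) (fun p hp => by simp [hp])]
  simp only [Fintype.sum_prod_type, sum_ite_irrel, sum_const_zero]
  rw [sum_ite_lt_eq_half_sum _ (fun i j => ?_) (fun i => ?_), sum_rootVec_mul_sq hα]
  · ring
  · simp only [rootVec_comm i j, hα i j, neg_sq]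
  · simp [hdiag]

theorem mul_transpose_mulVec_apply_of_rootVec {n m : ℕ} {α : Fin n → Fin n → Fin n → ℝ}
    (hα : ∀ i j k, α j i k = -α i j k) {t : Fin m → Fin n × Fin n × Fin n}
    (ht : Function.Injective t)
    (htmem : ∀ r, (t r).1 < (t r).2.1 ∧ α (t r).1 (t r).2.1 (t r).2.2 ≠ 0)
    (htsurj : ∀ i j k, i < j → α i j k ≠ 0 → ∃ r, t r = (i, j, k))
    {Y : Matrix (Fin m) (Fin n) ℝ} (hY : ∀ r, Y r = rootVec (t r).1 (t r).2.1 (t r).2.2)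
    {αsq : Fin m → ℝ} (hαsq : ∀ r, αsq r = α (t r).1 (t r).2.1 (t r).2.2 ^ 2)
    {κ : Fin n → ℝ}
    (hκ : ∀ l, κ l = -(1/2) * ∑ i, ∑ j, α l i j ^ 2 + (1/4) * ∑ i, ∑ j, α i j l ^ 2)
    (r : Fin m) :
    ((Y * Yᵀ) *ᵥ αsq) r = -2 * (κ (t r).1 + κ (t r).2.1 - κ (t r).2.2) := by
  have hcol : Yᵀ *ᵥ αsq = fun l => -2 * κ l := by
    funext l
    calc (Yᵀ *ᵥ αsq) l
        = ∑ r, rootVec (t r).1 (t r).2.1 (t r).2.2 l * α (t r).1 (t r).2.1 (t r).2.2 ^ 2 := by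
          simp [Matrix.mulVec, dotProduct, hY, hαsq]
      _ = ∑ j, ∑ k, α l j k ^ 2 - (1/2) * ∑ i, ∑ j, α i j l ^ 2 :=
          sum_rootVec_comp_enum_mul_sq hα ht htmem htsurj l
      _ = -2 * κ l := by rw [hκ l]; ring
  rw [← mulVec_mulVec, hcol]
  change Y r ⬝ᵥ _ = _
  rw [hY r, rootVec_dotProduct]
  ring

theorem forall_of_ne_zero_iff_forall_comp_enum {n m : ℕ} {α : Fin n → Fin n → Fin n → ℝ}
    (hα : ∀ i j k, α j i k = -α i j k) {t : Fin m → Fin n × Fin n × Fin n}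
    (htmem : ∀ r, (t r).1 < (t r).2.1 ∧ α (t r).1 (t r).2.1 (t r).2.2 ≠ 0)
    (htsurj : ∀ i j k, i < j → α i j k ≠ 0 → ∃ r, t r = (i, j, k))
    (P : Fin n → Fin n → Fin n → Prop) (hP : ∀ i j k, P i j k ↔ P j i k) :
    (∀ i j k, α i j k ≠ 0 → P i j k) ↔ ∀ r, P (t r).1 (t r).2.1 (t r).2.2 := by
  refine ⟨fun h r => h _ _ _ (htmem r).2, fun h i j k hne => ?_⟩
  rcases lt_trichotomy i j with hij | rfl | hij
  · obtain ⟨r, hr⟩ := htsurj i j k hij hne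
    simpa [hr] using h r
  · exact absurd (by linarith [hα i i k]) hne
  · obtain ⟨r, hr⟩ := htsurj j i k hij (by rwa [hα, neg_ne_zero])
    exact (hP j i k).mp (by simpa [hr] using h r)

theorem stmt16_general {L : Type*} [NormedAddCommGroup L] [InnerProductSpace ℝ L]
    {n m : ℕ}
    (lb : L →ₗ[ℝ] L →ₗ[ℝ] L)
    (hskew : ∀ x y, lb x y = - lb y x)
    (b : Module.Basis (Fin n) ℝ L) (hb : Orthonormal ℝ ⇑b)
    (α : Fin n → Fin n → Fin n → ℝ)
    (hα : ∀ i j k, α i j k = ⟪lb (b i) (b j), b k⟫)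
    (ric : L → L → ℝ)
    (hric : ∀ X Y, ric X Y =
      -(1/2) * ∑ i, ⟪lb X (b i), lb Y (b i)⟫
      + (1/4) * ∑ i, ∑ j, ⟪lb (b i) (b j), X⟫ * ⟪lb (b i) (b j), Y⟫)
    (κ : Fin n → ℝ)
    (heig : ∀ i j, ric (b i) (b j) = if i = j then κ i else 0)
    -- `t` enumerates the set `Λ` of triples `(i,j,k)` with `i < j` and `α_{ij}^k ≠ 0`
    (t : Fin m → Fin n × Fin n × Fin n)
    (ht : Function.Injective t)
    (htmem : ∀ r, (t r).1 < (t r).2.1 ∧ α (t r).1 (t r).2.1 (t r).2.2 ≠ 0)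
    (htsurj : ∀ i j k, i < j → α i j k ≠ 0 → ∃ r, t r = (i, j, k))
    (Y : Matrix (Fin m) (Fin n) ℝ)
    (hY : ∀ r, Y r = rootVec (t r).1 (t r).2.1 (t r).2.2)
    (U : Matrix (Fin m) (Fin m) ℝ) (hU : U = Y * Y.transpose)
    (αsq : Fin m → ℝ) (hαsq : ∀ r, αsq r = (α (t r).1 (t r).2.1 (t r).2.2)^2)
    (β : ℝ) (D : L →ₗ[ℝ] L)
    (hD : ∀ i, D (b i) = (κ i - β) • b i) :
    (∀ x y, D (lb x y) = lb (D x) y + lb x (D y)) ↔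
      U.mulVec αsq = fun _ => -2 * β := by
  have hαrepr : ∀ i j k, b.repr (lb (b i) (b j)) k = α i j k := fun i j k => by
    rw [b.repr_apply_eq_inner_of_orthonormal hb, hα, real_inner_comm]
  have hαanti : ∀ i j k, α j i k = -α i j k := fun i j k => by
    rw [hα, hα, hskew, inner_neg_left]
  have hκ : ∀ l,
      κ l = -(1/2) * ∑ i, ∑ j, α l i j ^ 2 + (1/4) * ∑ i, ∑ j, α i j l ^ 2 := by
    intro l
    have h := heig l l
    rw [if_pos rfl, hric] at h
    rw [← h]
    exact (nilRicci_self_eq_of_orthonormal hb lb (b l)).trans (by simp only [hα])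
  have hUα : ∀ r, (U *ᵥ αsq) r = -2 * (κ (t r).1 + κ (t r).2.1 - κ (t r).2.2) := by
    rw [hU]
    exact mul_transpose_mulVec_apply_of_rootVec hαanti ht htmem htsurj hY hαsq hκ
  calc IsDerivation lb D
      ↔ ∀ i j k, α i j k ≠ 0 → κ k - β = κ i - β + (κ j - β) := by
        simpa only [hαrepr] using isDerivation_iff_of_apply_eq_smul lb b hD
    _ ↔ ∀ r, κ (t r).2.2 - β = κ (t r).1 - β + (κ (t r).2.1 - β) :=
        forall_of_ne_zero_iff_forall_comp_enum hαanti htmem htsurj _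
          (fun i j k => by rw [add_comm])
    _ ↔ U *ᵥ αsq = fun _ => -2 * β := by
        rw [funext_iff]
        refine forall_congr' fun r => ?_
        rw [hUα r]
        constructor <;> intro h <;> linarith

/-- A metric skew algebra with Ricci eigenvector basis satisfies the nilsoliton
condition (`D = Ric - β Id` is a derivation) iff `U [α²] = -2β 𝟙`. -/
theorem stmt16 {L : Type*} [NormedAddCommGroup L] [InnerProductSpace ℝ L]
    [FiniteDimensional ℝ L] {n m : ℕ}
    (lb : L →ₗ[ℝ] L →ₗ[ℝ] L)
    (hskew : ∀ x y, lb x y = - lb y x)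
    (b : Module.Basis (Fin n) ℝ L) (hb : Orthonormal ℝ ⇑b)
    (α : Fin n → Fin n → Fin n → ℝ)
    (hα : ∀ i j k, α i j k = ⟪lb (b i) (b j), b k⟫)
    (ric : L → L → ℝ)
    (hric : ∀ X Y, ric X Y =
      -(1/2) * ∑ i, ⟪lb X (b i), lb Y (b i)⟫
      + (1/4) * ∑ i, ∑ j, ⟪lb (b i) (b j), X⟫ * ⟪lb (b i) (b j), Y⟫)
    (κ : Fin n → ℝ)
    (heig : ∀ i j, ric (b i) (b j) = if i = j then κ i else 0)
    -- `t` enumerates the set `Λ` of triples `(i,j,k)` with `i < j` and `α_{ij}^k ≠ 0`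
    (t : Fin m → Fin n × Fin n × Fin n)
    (ht : Function.Injective t)
    (htmem : ∀ r, (t r).1 < (t r).2.1 ∧ α (t r).1 (t r).2.1 (t r).2.2 ≠ 0)
    (htsurj : ∀ i j k, i < j → α i j k ≠ 0 → ∃ r, t r = (i, j, k))
    (Y : Matrix (Fin m) (Fin n) ℝ)
    (hY : ∀ r, Y r = rootVec (t r).1 (t r).2.1 (t r).2.2)
    (U : Matrix (Fin m) (Fin m) ℝ) (hU : U = Y * Y.transpose)
    (αsq : Fin m → ℝ) (hαsq : ∀ r, αsq r = (α (t r).1 (t r).2.1 (t r).2.2)^2)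
    (β : ℝ) (D : L →ₗ[ℝ] L)
    (hD : ∀ i, D (b i) = (κ i - β) • b i) :
    (∀ x y, D (lb x y) = lb (D x) y + lb x (D y)) ↔
      U.mulVec αsq = fun _ => -2 * β :=
  stmt16_general lb hskew b hb α hα ric hric κ heig t ht htmem htsurj Y hY U hU αsq hαsq β D hD
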